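/- arXiv:2209.08428 — 4 statements merged into one kernel-verified Lean document; each statement's English description precedes it below -/
import Mathlib

section
/- Let S₁,…,S_R be linear subspaces of ℝⁿ, S = ⋃ᵣ Sᵣ, and x* ∈ S with active index set I(x*) = {r : x* ∈ Sᵣ}. Then the Fréchet (regular) normal cone to S at x* equals ⋂_{r ∈ I(x*)} Sᵣ^⊥, the intersection of the orthogonal complements of the active subspaces. -/
/-
Near `x*` only the active subspaces meet a small ball, since the inactive ones are finitely many
closed sets missing `x*`. Locally the union is therefore a union of subspaces through `x*`, and a
vector orthogonal to all of them pairs to zero with every `y - x*`, so it is a Fréchet normal.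
Conversely, each active subspace `V` lies in the union, so `x* ± t • u` (`u ∈ V`, `t > 0`) are
feasible and Fréchet normality forces `⟪v, ±u⟫ ≤ 0`, i.e. `v ∈ Vᗮ`.
-/

open Filter Topology Metric Set
open scoped Classical

noncomputable section

abbrev E (n : ℕ) := EuclideanSpace ℝ (Fin n)

/-- Bouligand tangent cone. -/
def bouligand {n : ℕ} (S : Set (E n)) (x : E n) : Set (E n) :=
  {d | ∃ t : ℕ → ℝ, ∃ dk : ℕ → E n,
    (∀ k, 0 < t k) ∧ Tendsto t atTop (𝓝 0) ∧ Tendsto dk atTop (𝓝 d) ∧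
    ∀ k, x + t k • dk k ∈ S}

/-- Fréchet (regular) normal cone. -/
def frechetNormal {n : ℕ} (S : Set (E n)) (x : E n) : Set (E n) :=
  {v | ∀ ε > (0 : ℝ), ∃ δ > (0 : ℝ), ∀ y ∈ S, ‖y - x‖ < δ →
    (inner ℝ v (y - x) : ℝ) ≤ ε * ‖y - x‖}

/-- Mordukhovich (limiting) normal cone. -/
def limitingNormal {n : ℕ} (S : Set (E n)) (x : E n) : Set (E n) :=
  {v | ∃ xk : ℕ → E n, ∃ vk : ℕ → E n,
    (∀ k, xk k ∈ S) ∧ Tendsto xk atTop (𝓝 x) ∧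
    (∀ k, vk k ∈ frechetNormal S (xk k)) ∧ Tendsto vk atTop (𝓝 v)}

/-- Directional limiting normal cone. -/
def dirLimitingNormal {n : ℕ} (S : Set (E n)) (x d : E n) : Set (E n) :=
  {v | ∃ t : ℕ → ℝ, ∃ dk : ℕ → E n, ∃ vk : ℕ → E n,
    (∀ k, 0 < t k) ∧ Tendsto t atTop (𝓝 0) ∧ Tendsto dk atTop (𝓝 d) ∧
    Tendsto vk atTop (𝓝 v) ∧ ∀ k, vk k ∈ frechetNormal S (x + t k • dk k)}

theorem Metric.exists_pos_iUnion_inter_ball_subset {ι X : Type*} [Finite ι] [PseudoMetricSpace X]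
    (C : ι → Set X) (hC : ∀ i, IsClosed (C i)) (x : X) :
    ∃ δ > 0, (⋃ i, C i) ∩ ball x δ ⊆ ⋃ i ∈ {i | x ∈ C i}, C i := by
  have hopen : IsOpen (⋃ i ∈ {i | x ∉ C i}, C i)ᶜ :=
    ((toFinite _).isClosed_biUnion fun i _ => hC i).isOpen_compl
  have hx : x ∈ (⋃ i ∈ {i | x ∉ C i}, C i)ᶜ := by simp
  obtain ⟨δ, hδ, hball⟩ := Metric.isOpen_iff.mp hopen x hx
  refine ⟨δ, hδ, ?_⟩
  rintro y ⟨hy, hyδ⟩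
  obtain ⟨i, hyi⟩ := mem_iUnion.mp hy
  by_cases hxi : x ∈ C i
  · exact mem_biUnion hxi hyi
  · exact absurd (mem_biUnion hxi hyi) (hball hyδ)

section FrechetNormal

variable {n : ℕ} {S T : Set (E n)} {x u v : E n}

theorem inner_le_mul_norm_of_mem_frechetNormal (hv : v ∈ frechetNormal S x)
    (hu : ∀ t > (0 : ℝ), x + t • u ∈ S) {ε : ℝ} (hε : 0 < ε) :
    inner ℝ v u ≤ ε * ‖u‖ := by
  obtain ⟨δ, hδ, hvδ⟩ := hv ε hε
  have hsmall : ∀ᶠ t in 𝓝[>] (0 : ℝ), ‖t • u‖ < δ := by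
    have : Tendsto (fun t : ℝ => ‖t • u‖) (𝓝 0) (𝓝 0) := by
      simpa using ((continuous_id.smul continuous_const).norm (E := E n)).tendsto' 0 0 (by simp)
    exact nhdsWithin_le_nhds (this.eventually (gt_mem_nhds hδ))
  obtain ⟨t, ht, htδ⟩ := (eventually_mem_nhdsWithin.and hsmall).exists
  have hstep := hvδ (x + t • u) (hu t ht) (by simpa using htδ)
  rw [add_sub_cancel_left, real_inner_smul_right, norm_smul, Real.norm_of_nonneg ht.le] at hstep
  exact le_of_mul_le_mul_left (by linarith) ht

theorem inner_nonpos_of_mem_frechetNormal (hv : v ∈ frechetNormal S x)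
    (hu : ∀ t > (0 : ℝ), x + t • u ∈ S) : inner ℝ v u ≤ 0 := by
  refine le_of_forall_pos_le_add fun ε hε => ?_
  have hbound :=
    inner_le_mul_norm_of_mem_frechetNormal hv hu (div_pos hε (by positivity : 0 < ‖u‖ + 1))
  have : ε / (‖u‖ + 1) * ‖u‖ ≤ ε := by
    rw [div_mul_eq_mul_div, div_le_iff₀ (by positivity)]
    nlinarith [norm_nonneg u]
  linarith

theorem frechetNormal_subset_orthogonal {V : Submodule ℝ (E n)} (hx : x ∈ V)
    (hVS : (V : Set (E n)) ⊆ S) : frechetNormal S x ⊆ (Vᗮ : Set (E n)) := by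
  intro v hv
  rw [SetLike.mem_coe, Submodule.mem_orthogonal']
  intro u hu
  have hline : ∀ w ∈ V, ∀ t > (0 : ℝ), x + t • w ∈ S :=
    fun w hw t _ => hVS (V.add_mem hx (V.smul_mem t hw))
  have hpos := inner_nonpos_of_mem_frechetNormal hv (hline u hu)
  have hneg := inner_nonpos_of_mem_frechetNormal hv (hline (-u) (V.neg_mem hu))
  rw [inner_neg_right] at hneg
  linarith

theorem frechetNormal_subset_of_inter_ball_subset {δ : ℝ} (hδ : 0 < δ)
    (hST : S ∩ ball x δ ⊆ T) : frechetNormal T x ⊆ frechetNormal S x := by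
  intro v hv ε hε
  obtain ⟨δ', hδ', hvδ'⟩ := hv ε hε
  refine ⟨min δ δ', lt_min hδ hδ', fun y hy hyx =>
    hvδ' y ?_ (hyx.trans_le (min_le_right _ _))⟩
  exact hST ⟨hy, by rw [mem_ball, dist_eq_norm]; exact hyx.trans_le (min_le_left _ _)⟩

theorem biInter_orthogonal_subset_frechetNormal_biUnion {ι : Type*}
    (W : ι → Submodule ℝ (E n)) (s : Set ι) (hx : ∀ i ∈ s, x ∈ W i) :
    ⋂ i ∈ s, ((W i)ᗮ : Set (E n)) ⊆ frechetNormal (⋃ i ∈ s, (W i : Set (E n))) x := by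
  intro v hv ε hε
  refine ⟨1, one_pos, fun y hy _ => ?_⟩
  obtain ⟨i, hi, hyi⟩ := mem_iUnion₂.mp hy
  have hzero : inner ℝ v (y - x) = 0 :=
    (Submodule.mem_orthogonal' _ _).mp (mem_iInter₂.mp hv i hi) _ ((W i).sub_mem hyi (hx i hi))
  rw [hzero]
  positivity

end FrechetNormal

theorem stmt3_general {n R : ℕ} (V : Fin R → Submodule ℝ (E n))
    (x : E n) :
    frechetNormal (⋃ r, (V r : Set (E n))) x
      = ⋂ r ∈ {r : Fin R | x ∈ V r}, ((V r)ᗮ : Set (E n)) := by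
  obtain ⟨δ, hδ, hlocal⟩ := Metric.exists_pos_iUnion_inter_ball_subset
    (fun r => (V r : Set (E n))) (fun r => (V r).closed_of_finiteDimensional) x
  refine Subset.antisymm ?_ ?_
  · exact subset_iInter₂ fun r hr =>
      frechetNormal_subset_orthogonal hr (subset_iUnion (fun r => (V r : Set (E n))) r)
  · exact (biInter_orthogonal_subset_frechetNormal_biUnion V _ fun r hr => hr).trans
      (frechetNormal_subset_of_inter_ball_subset hδ hlocal)

theorem stmt3 {n R : ℕ} (V : Fin R → Submodule ℝ (E n))
    (x : E n) (hx : x ∈ ⋃ r, (V r : Set (E n))) :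
    frechetNormal (⋃ r, (V r : Set (E n))) x
      = ⋂ r ∈ {r : Fin R | x ∈ V r}, ((V r)ᗮ : Set (E n)) :=
  stmt3_general V x
end
end

section
/- Let S₁,…,S_R be linear subspaces of ℝⁿ, S = ⋃ᵣ Sᵣ, x* ∈ S, and d ∈ T_S(x*) a tangent direction. Then the Fréchet normal cone to the tangent cone T_S(x*) at d equals ⋂_{r ∈ I(x*) ∩ I(d)} Sᵣ^⊥, where I(y) = {r : y ∈ Sᵣ}. -/
/-!
A tangent sequence `x + tₖ dₖ` to a finite union of subspaces lies infinitely often in a single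
subspace `Vᵣ`, and closedness of `Vᵣ` forces `x, d ∈ Vᵣ`; so the tangent cone is the union of the
`Vᵣ` with `x ∈ Vᵣ`. Since `𝓝[⋃ Aᵢ] d = ⨆ 𝓝[Aᵢ] d` for finitely many pieces, the Fréchet normal
cone of a finite union is the intersection of those of the pieces. A closed piece missing `d`
contributes nothing, and a subspace containing `d` has its orthogonal complement as normal cone.
-/

open Filter Topology Metric Set
open scoped Classical

noncomputable section

section TangentCone

variable {n : ℕ}

lemma mem_bouligand_of_forall_add_smul_mem {S : Set (E n)} {x d : E n}
    (h : ∀ t : ℝ, 0 < t → x + t • d ∈ S) : d ∈ bouligand S x :=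
  ⟨fun k => 1 / (k + 1), fun _ => d, fun _ => by positivity,
    tendsto_one_div_add_atTop_nhds_zero_nat, tendsto_const_nhds, fun _ => h _ (by positivity)⟩

lemma bouligand_mono {S T : Set (E n)} (hST : S ⊆ T) (x : E n) :
    bouligand S x ⊆ bouligand T x := by
  rintro d ⟨t, dk, ht, ht0, hdk, hmem⟩
  exact ⟨t, dk, ht, ht0, hdk, fun k => hST (hmem k)⟩

lemma bouligand_iUnion {ι : Type*} [Finite ι] (A : ι → Set (E n)) (x : E n) :
    bouligand (⋃ i, A i) x = ⋃ i, bouligand (A i) x := by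
  refine Subset.antisymm ?_ (iUnion_subset fun i => bouligand_mono (subset_iUnion A i) x)
  rintro d ⟨t, dk, ht, ht0, hdk, hmem⟩
  have hfreq : ∃ᶠ k in atTop, ∃ i, x + t k • dk k ∈ A i :=
    Frequently.of_forall fun k => mem_iUnion.1 (hmem k)
  obtain ⟨i, hi⟩ := frequently_exists.1 hfreq
  obtain ⟨φ, hφ, hφmem⟩ := extraction_of_frequently_atTop hi
  exact mem_iUnion.2 ⟨i, t ∘ φ, dk ∘ φ, fun k => ht (φ k), ht0.comp hφ.tendsto_atTop,
    hdk.comp hφ.tendsto_atTop, hφmem⟩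

lemma mem_bouligand_submodule_iff (W : Submodule ℝ (E n)) (x d : E n) :
    d ∈ bouligand (W : Set (E n)) x ↔ x ∈ W ∧ d ∈ W := by
  refine ⟨?_, fun ⟨hx, hd⟩ => mem_bouligand_of_forall_add_smul_mem fun t _ =>
    W.add_mem hx (W.smul_mem t hd)⟩
  rintro ⟨t, dk, ht, ht0, hdk, hmem⟩
  have hW : IsClosed (W : Set (E n)) := W.closed_of_finiteDimensional
  have hx : x ∈ W := by
    have hlim : Tendsto (fun k => x + t k • dk k) atTop (𝓝 (x + (0 : ℝ) • d)) :=
      tendsto_const_nhds.add (ht0.smul hdk)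
    rw [zero_smul, add_zero] at hlim
    exact hW.mem_of_tendsto hlim (Eventually.of_forall hmem)
  have hdk_mem : ∀ k, dk k ∈ W := fun k =>
    (W.smul_mem_iff (ht k).ne').1 ((W.add_mem_iff_right hx).1 (hmem k))
  exact ⟨hx, hW.mem_of_tendsto hdk (Eventually.of_forall hdk_mem)⟩

lemma bouligand_iUnion_submodule {ι : Type*} [Finite ι] (V : ι → Submodule ℝ (E n))
    (x : E n) :
    bouligand (⋃ i, (V i : Set (E n))) x = ⋃ i ∈ {i | x ∈ V i}, (V i : Set (E n)) := by
  ext d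
  simp [bouligand_iUnion, mem_bouligand_submodule_iff]

end TangentCone

section NormalCone

variable {n : ℕ}

lemma mem_frechetNormal_iff_eventually {S : Set (E n)} {d v : E n} :
    v ∈ frechetNormal S d ↔
      ∀ ε > (0 : ℝ), ∀ᶠ y in 𝓝[S] d, inner ℝ v (y - d) ≤ ε * ‖y - d‖ := by
  refine forall₂_congr fun ε _ => ?_
  rw [eventually_iff, Metric.mem_nhdsWithin_iff]
  simp only [subset_def, mem_inter_iff, Metric.mem_ball, dist_eq_norm, and_imp, mem_ofPred_eq]
  exact exists_congr fun δ => and_congr_right' (forall_congr' fun y => Imp.swap)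

lemma frechetNormal_biUnion {ι : Type*} {s : Set ι} (hs : s.Finite) (A : ι → Set (E n))
    (d : E n) : frechetNormal (⋃ i ∈ s, A i) d = ⋂ i ∈ s, frechetNormal (A i) d := by
  ext v
  simp only [mem_iInter, mem_frechetNormal_iff_eventually, nhdsWithin_biUnion hs,
    eventually_iSup]
  exact ⟨fun h i hi ε hε => h ε hε i hi, fun h ε hε i hi => h i hi ε hε⟩

lemma frechetNormal_eq_univ_of_notMem_closure {S : Set (E n)} {d : E n}
    (hd : d ∉ closure S) : frechetNormal S d = univ := by
  refine eq_univ_of_forall fun v => mem_frechetNormal_iff_eventually.2 fun ε _ => ?_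
  rw [notMem_closure_iff_nhdsWithin_eq_bot.1 hd]
  exact eventually_bot

lemma nonpos_of_forall_pos_le_mul {a c : ℝ} (h : ∀ ε > 0, a ≤ ε * c) : a ≤ 0 := by
  have hlim : Tendsto (fun ε : ℝ => ε * c) (𝓝[>] 0) (𝓝 0) :=
    (Continuous.tendsto' (f := fun ε : ℝ => ε * c) (by fun_prop) 0 0 (zero_mul c)).mono_left
      nhdsWithin_le_nhds
  exact ge_of_tendsto hlim (eventually_nhdsWithin_of_forall h)

lemma inner_nonpos_of_mem_frechetNormal_s5 {S : Set (E n)} {d v w : E n}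
    (hv : v ∈ frechetNormal S d) (hw : ∀ᶠ s in 𝓝[>] (0 : ℝ), d + s • w ∈ S) :
    inner ℝ v w ≤ 0 := by
  have hpath : Tendsto (fun s : ℝ => d + s • w) (𝓝[>] 0) (𝓝[S] d) := by
    refine tendsto_nhdsWithin_iff.2 ⟨?_, hw⟩
    exact (Continuous.tendsto' (f := fun s : ℝ => d + s • w) (by fun_prop) 0 d
      (by simp)).mono_left nhdsWithin_le_nhds
  refine nonpos_of_forall_pos_le_mul (c := ‖w‖) fun ε hε => ?_
  obtain ⟨s, hs, hle⟩ := ((eventually_nhdsWithin_of_forall fun s hs => hs).and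
    (hpath.eventually (mem_frechetNormal_iff_eventually.1 hv ε hε))).exists
  simp only [add_sub_cancel_left, real_inner_smul_right, norm_smul,
    Real.norm_of_nonneg (le_of_lt hs)] at hle
  exact le_of_mul_le_mul_left (by linarith) hs

lemma frechetNormal_submodule_of_mem (W : Submodule ℝ (E n)) {d : E n} (hd : d ∈ W) :
    frechetNormal (W : Set (E n)) d = (Wᗮ : Set (E n)) := by
  ext v
  refine ⟨fun hv => (W.mem_orthogonal' v).2 fun w hw => le_antisymm ?_ ?_, fun hv => ?_⟩
  · exact inner_nonpos_of_mem_frechetNormal_s5 hv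
      (Eventually.of_forall fun s => W.add_mem hd (W.smul_mem s hw))
  · have := inner_nonpos_of_mem_frechetNormal_s5 hv
      (Eventually.of_forall fun s => W.add_mem hd (W.smul_mem s (W.neg_mem hw)))
    rwa [inner_neg_right, neg_nonpos] at this
  · refine mem_frechetNormal_iff_eventually.2 fun ε _ => eventually_nhdsWithin_of_forall
      fun y hy => ?_
    rw [Submodule.inner_left_of_mem_orthogonal (W.sub_mem hy hd) hv]
    positivity

end NormalCone

theorem stmt5_general {n R : ℕ} (V : Fin R → Submodule ℝ (E n))
    (x : E n) (d : E n) :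
    frechetNormal (bouligand (⋃ r, (V r : Set (E n))) x) d
      = ⋂ r ∈ {r : Fin R | x ∈ V r ∧ d ∈ V r}, ((V r)ᗮ : Set (E n)) := by
  rw [bouligand_iUnion_submodule, frechetNormal_biUnion (toFinite _)]
  ext v
  simp only [mem_iInter, mem_ofPred_eq, and_imp]
  refine forall_congr' fun r => forall_congr' fun _ => ?_
  by_cases hdr : d ∈ V r
  · simp [frechetNormal_submodule_of_mem _ hdr, hdr]
  · simp [frechetNormal_eq_univ_of_notMem_closure
      (by rwa [(V r).closed_of_finiteDimensional.closure_eq]), hdr]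

theorem stmt5 {n R : ℕ} (V : Fin R → Submodule ℝ (E n))
    (x : E n) (hx : x ∈ ⋃ r, (V r : Set (E n)))
    (d : E n) (hd : d ∈ bouligand (⋃ r, (V r : Set (E n))) x) :
    frechetNormal (bouligand (⋃ r, (V r : Set (E n))) x) d
      = ⋂ r ∈ {r : Fin R | x ∈ V r ∧ d ∈ V r}, ((V r)ᗮ : Set (E n)) :=
  stmt5_general V x d
end
end

section
/- Let S = {x ∈ ℝⁿ : ‖x‖₀ ≤ s} with s < n and x* ∈ S. If |supp(x*)| = s, then the Fréchet normal cone to S at x* equals ℝ_{supp(x*)}^⊥ = {v ∈ ℝⁿ : vᵢ = 0 for all i ∈ supp(x*)}; if |supp(x*)| < s, then the Fréchet normal cone to S at x* equals {0}. -/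
open Filter Topology Metric Set
open scoped Classical

noncomputable section

/-- Support of a vector. -/
def supp {n : ℕ} (x : E n) : Finset (Fin n) := Finset.univ.filter (fun i => x i ≠ 0)

/-- The ℓ₀ "norm": number of nonzero components. -/
def l0 {n : ℕ} (x : E n) : ℕ := (supp x).card

/-- The sparsity set {x : ‖x‖₀ ≤ s}. -/
def sparseSet (n s : ℕ) : Set (E n) := {x | l0 x ≤ s}

/-- Coordinate subspace ℝ_I of vectors supported on I. -/
def coordSub {n : ℕ} (I : Finset (Fin n)) : Set (E n) := {x | ∀ i ∉ I, x i = 0}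

/-!
A Fréchet normal to `S` at `x` is orthogonal to every line through `x` contained in `S`. The
coordinate lines `x + ℝ eᵢ` lie in `S = {‖·‖₀ ≤ s}` for `i ∈ supp x`, and for every `i` when
`‖x‖₀ < s`. Conversely, small perturbations can only enlarge the support, so when `‖x‖₀ = s` the
points of `S` near `x` all have support `supp x`, and a `v` vanishing there is orthogonal to
`y - x` for all of them.
-/

namespace FrechetNormal

variable {n : ℕ} {S : Set (E n)} {x v : E n}

theorem mem_of_eventually_inner_nonpos
    (h : ∀ᶠ y in 𝓝 x, y ∈ S → inner ℝ v (y - x) ≤ 0) : v ∈ frechetNormal S x := by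
  intro ε hε
  obtain ⟨δ, hδ, hδx⟩ := Metric.eventually_nhds_iff.mp h
  refine ⟨δ, hδ, fun y hy hyx => ?_⟩
  calc inner ℝ v (y - x) ≤ 0 := hδx (by rwa [dist_eq_norm]) hy
    _ ≤ ε * ‖y - x‖ := by positivity

theorem zero_mem : (0 : E n) ∈ frechetNormal S x :=
  mem_of_eventually_inner_nonpos <| .of_forall fun y _ => by rw [inner_zero_left]

theorem inner_nonpos_of_forall_pos_add_smul_mem (hv : v ∈ frechetNormal S x) {d : E n}
    (hd : ∀ t > (0 : ℝ), x + t • d ∈ S) : inner ℝ v d ≤ 0 := by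
  rcases eq_or_ne d 0 with rfl | hd0
  · rw [inner_zero_right]
  have hdpos : 0 < ‖d‖ := norm_pos_iff.mpr hd0
  refine le_of_forall_pos_le_add fun η hη => ?_
  obtain ⟨δ, hδ, H⟩ := hv (η / ‖d‖) (by positivity)
  set t := δ / (2 * ‖d‖)
  have ht : 0 < t := by positivity
  have htd : t * ‖d‖ = δ / 2 := by simp only [t]; field_simp
  have hnorm : ‖x + t • d - x‖ = δ / 2 := by
    rw [add_sub_cancel_left, norm_smul, Real.norm_of_nonneg ht.le, htd]
  have hstep := H _ (hd t ht) (by rw [hnorm]; linarith)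
  rw [hnorm, add_sub_cancel_left, inner_smul_right, ← htd] at hstep
  have : t * inner ℝ v d ≤ t * η := by
    calc t * inner ℝ v d ≤ η / ‖d‖ * (t * ‖d‖) := hstep
      _ = t * η := by field_simp
  linarith [le_of_mul_le_mul_left this ht]

theorem inner_eq_zero_of_forall_add_smul_mem (hv : v ∈ frechetNormal S x) {d : E n}
    (hd : ∀ t : ℝ, x + t • d ∈ S) : inner ℝ v d = 0 := by
  have hneg : inner ℝ v (-d) ≤ 0 :=
    inner_nonpos_of_forall_pos_add_smul_mem hv fun t _ => by simpa using hd (-t)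
  rw [inner_neg_right] at hneg
  exact le_antisymm (inner_nonpos_of_forall_pos_add_smul_mem hv fun t _ => hd t) (by linarith)

theorem apply_eq_zero_of_forall_add_single_mem (hv : v ∈ frechetNormal S x) (i : Fin n)
    (hi : ∀ t : ℝ, x + EuclideanSpace.single i t ∈ S) : v i = 0 := by
  have h := inner_eq_zero_of_forall_add_smul_mem hv (d := EuclideanSpace.single i 1)
    fun t => by
      convert hi t using 2
      ext j
      simp [PiLp.single_apply]
  simpa [EuclideanSpace.inner_single_right] using h

end FrechetNormal

section Support

variable {n : ℕ}

theorem mem_supp {x : E n} {i : Fin n} : i ∈ supp x ↔ x i ≠ 0 := by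
  simp [supp]

theorem supp_add_single_subset (x : E n) (i : Fin n) (t : ℝ) :
    supp (x + EuclideanSpace.single i t) ⊆ insert i (supp x) := by
  intro j hj
  rw [Finset.mem_insert, mem_supp]
  rw [mem_supp] at hj
  by_cases h : j = i
  · exact .inl h
  · exact .inr (by simpa [PiLp.single_apply, h] using hj)

theorem supp_sub_subset (x y : E n) : supp (y - x) ⊆ supp y ∪ supp x := by
  intro i hi
  rw [Finset.mem_union, mem_supp, mem_supp]
  rw [mem_supp] at hi
  by_contra! h
  exact hi (by simp [h.1, h.2])

theorem eventually_supp_subset_supp (x : E n) : ∀ᶠ y in 𝓝 x, supp x ⊆ supp y := by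
  have h : ∀ i ∈ supp x, ∀ᶠ y in 𝓝 x, y i ≠ 0 := fun i hi =>
    (PiLp.continuous_apply 2 _ i).continuousAt.eventually_ne (mem_supp.mp hi)
  filter_upwards [(Filter.eventually_all_finset _).mpr h] with y hy i hi
  exact mem_supp.mpr (hy i hi)

theorem inner_eq_zero_of_supp_subset {I : Finset (Fin n)} {v z : E n}
    (hv : ∀ i ∈ I, v i = 0) (hz : supp z ⊆ I) : inner ℝ v z = 0 := by
  rw [PiLp.inner_apply]
  refine Finset.sum_eq_zero fun i _ => ?_
  by_cases hi : i ∈ I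
  · simp [hv i hi]
  · have : z i = 0 := by_contra fun h => hi (hz (mem_supp.mpr h))
    simp [this]

theorem add_single_mem_sparseSet {s : ℕ} {x : E n} {i : Fin n}
    (h : (insert i (supp x)).card ≤ s) (t : ℝ) :
    x + EuclideanSpace.single i t ∈ sparseSet n s :=
  (Finset.card_le_card (supp_add_single_subset x i t)).trans h

end Support

variable {n s : ℕ} {x : E n}

theorem frechetNormal_sparseSet_of_card_eq (hx : (supp x).card = s) :
    frechetNormal (sparseSet n s) x = {v : E n | ∀ i ∈ supp x, v i = 0} := by
  ext v
  constructor
  · intro hv i hi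
    refine FrechetNormal.apply_eq_zero_of_forall_add_single_mem hv i
      (add_single_mem_sparseSet ?_)
    rw [Finset.insert_eq_of_mem hi, hx]
  · intro hv
    refine FrechetNormal.mem_of_eventually_inner_nonpos ?_
    filter_upwards [eventually_supp_subset_supp x] with y hxy hy
    have hyx : supp y = supp x :=
      (Finset.eq_of_subset_of_card_le hxy (hx ▸ hy)).symm
    have hsub : supp (y - x) ⊆ supp x := by
      simpa [hyx] using supp_sub_subset x y
    exact (inner_eq_zero_of_supp_subset hv hsub).le

theorem frechetNormal_sparseSet_of_card_lt (hx : (supp x).card < s) :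
    frechetNormal (sparseSet n s) x = {0} := by
  ext v
  refine ⟨fun hv => ?_, fun hv => hv ▸ FrechetNormal.zero_mem⟩
  ext i
  exact FrechetNormal.apply_eq_zero_of_forall_add_single_mem hv i
    (add_single_mem_sparseSet ((Finset.card_insert_le _ _).trans hx))

theorem stmt12_general {n s : ℕ} (x : E n) :
    ((supp x).card = s →
      frechetNormal (sparseSet n s) x = {v : E n | ∀ i ∈ supp x, v i = 0}) ∧
    ((supp x).card < s →
      frechetNormal (sparseSet n s) x = {0}) :=
  ⟨frechetNormal_sparseSet_of_card_eq, frechetNormal_sparseSet_of_card_lt⟩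

theorem stmt12 {n s : ℕ} (hs : s < n) (x : E n) (hx : x ∈ sparseSet n s) :
    ((supp x).card = s →
      frechetNormal (sparseSet n s) x = {v : E n | ∀ i ∈ supp x, v i = 0}) ∧
    ((supp x).card < s →
      frechetNormal (sparseSet n s) x = {0}) :=
  stmt12_general x
end
end

section
/- For the sparsity set S = {x ∈ ℝⁿ : ‖x‖₀ ≤ s} with s < n and any x* ∈ S, there exists δ > 0 such that the limiting normal cone of S at x* equals the union of the Fréchet normal cones of S over points in the ball of radius δ around x*: N_S(x*) = ⋃_{x ∈ B_δ(x*) ∩ S} N̂_S(x). -/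
/-!
Near `x` every vector has support containing `supp x`. The Fréchet normal cone of
`{‖·‖₀ ≤ s}` at `y` is `{0}` when `‖y‖₀ < s` (every coordinate line through `y` stays in the set)
and is the coordinate subspace complementary to `supp y` when `‖y‖₀ = s` (near `y` the set
coincides with the vectors supported on `supp y`). So it depends only on `supp y`, and with `w`
it contains every `v` with `supp v ⊆ supp w`. If Fréchet normals `w_k` at `x_k → x` converge to
`v`, then eventually `supp v ⊆ supp w_k`, so `v` is already a Fréchet normal at some `x_k` near
`x`. Conversely, the points of the segment from `x` to a nearby `y` have the support of `y`,
hence its Fréchet normal cone.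
-/

open Filter Topology Metric Set
open scoped Classical

noncomputable section

namespace SparseSet

variable {n s : ℕ}

lemma mem_supp {y : E n} {i : Fin n} : i ∈ supp y ↔ y i ≠ 0 := by simp [supp]

lemma eventually_supp_subset (x : E n) : ∀ᶠ z in 𝓝 x, supp x ⊆ supp z := by
  have h : ∀ i ∈ supp x, ∀ᶠ z in 𝓝 x, z i ≠ 0 := fun i hi =>
    (EuclideanSpace.proj i).continuous.continuousAt.eventually_ne (mem_supp.1 hi)
  filter_upwards [(Filter.eventually_all_finset _).2 h] with z hz i hi
  exact mem_supp.2 (hz i hi)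

lemma exists_pos_supp_subset (x : E n) : ∃ δ > 0, ∀ z ∈ ball x δ, supp x ⊆ supp z :=
  Metric.eventually_nhds_iff_ball.1 (eventually_supp_subset x)

lemma supp_add_single_subset (y : E n) (i : Fin n) (t : ℝ) :
    supp (y + EuclideanSpace.single i t) ⊆ insert i (supp y) := by
  intro j hj
  rcases eq_or_ne j i with rfl | hji
  · exact Finset.mem_insert_self _ _
  · refine Finset.mem_insert_of_mem (mem_supp.2 ?_)
    simpa [hji] using mem_supp.1 hj

lemma add_single_mem_of_mem_supp {y : E n} (hy : y ∈ sparseSet n s) {i : Fin n}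
    (hi : i ∈ supp y) (t : ℝ) : y + EuclideanSpace.single i t ∈ sparseSet n s := by
  have h := supp_add_single_subset y i t
  rw [Finset.insert_eq_of_mem hi] at h
  exact (Finset.card_le_card h).trans hy

lemma add_single_mem_of_l0_lt {y : E n} (hy : l0 y < s) (i : Fin n) (t : ℝ) :
    y + EuclideanSpace.single i t ∈ sparseSet n s :=
  calc l0 (y + EuclideanSpace.single i t) ≤ (insert i (supp y)).card :=
        Finset.card_le_card (supp_add_single_subset y i t)
    _ ≤ l0 y + 1 := Finset.card_insert_le _ _
    _ ≤ s := hy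

lemma zero_mem_frechetNormal (S : Set (E n)) (y : E n) : (0 : E n) ∈ frechetNormal S y :=
  fun _ _ => ⟨1, one_pos, fun _ _ _ => by rw [inner_zero_left]; positivity⟩

lemma apply_eq_zero_of_mem_frechetNormal {S : Set (E n)} {y v : E n}
    (hv : v ∈ frechetNormal S y) {i : Fin n}
    (hline : ∀ t : ℝ, y + EuclideanSpace.single i t ∈ S) : v i = 0 := by
  suffices h : ∀ ε > (0 : ℝ), |v i| ≤ ε from
    abs_nonpos_iff.1 (le_of_forall_pos_le_add fun ε hε => by simpa using h ε hε)
  intro ε hε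
  obtain ⟨δ, hδ, hnormal⟩ := hv ε hε
  have step : ∀ t : ℝ, |t| < δ → t * v i ≤ ε * |t| := fun t ht => by
    have h := hnormal _ (hline t) (by simpa using ht)
    simpa [EuclideanSpace.inner_single_right, mul_comm] using h
  have hr : 0 < δ / 2 := half_pos hδ
  have hpos := step (δ / 2) (by rw [abs_of_pos hr]; exact half_lt_self hδ)
  have hneg := step (-(δ / 2)) (by rw [abs_neg, abs_of_pos hr]; exact half_lt_self hδ)
  rw [abs_neg, abs_of_pos hr] at hneg
  rw [abs_of_pos hr] at hpos
  exact abs_le.2 ⟨by nlinarith, by nlinarith⟩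

/-- At a point with `‖y‖₀ = s` the sparsity set locally coincides with the vectors supported
on `supp y`, so normals to that coordinate subspace are Fréchet normals. -/
lemma mem_frechetNormal_of_l0_eq {y v : E n} (hy : l0 y = s)
    (hv : ∀ i ∈ supp y, v i = 0) : v ∈ frechetNormal (sparseSet n s) y := by
  intro ε hε
  obtain ⟨δ, hδ, hsub⟩ := exists_pos_supp_subset y
  refine ⟨δ, hδ, fun z hz hzy => ?_⟩
  have hsupp : supp y = supp z :=
    Finset.eq_of_subset_of_card_le (hsub z (by rwa [mem_ball, dist_eq_norm]))
      (hz.trans hy.ge)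
  have horth : (inner ℝ v (z - y) : ℝ) = 0 := by
    simp only [PiLp.inner_apply, RCLike.inner_apply, conj_trivial]
    refine Finset.sum_eq_zero fun i _ => ?_
    by_cases hi : i ∈ supp y
    · simp [hv i hi]
    · have hzi : z i = 0 := by simpa [mem_supp, hsupp] using hi
      have hyi : y i = 0 := by simpa [mem_supp] using hi
      simp [hzi, hyi]
  rw [horth]
  positivity

theorem mem_frechetNormal_iff {y v : E n} (hy : y ∈ sparseSet n s) :
    v ∈ frechetNormal (sparseSet n s) y ↔ v = 0 ∨ (l0 y = s ∧ ∀ i ∈ supp y, v i = 0) := by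
  constructor
  · intro hv
    by_cases hv0 : v = 0
    · exact Or.inl hv0
    refine Or.inr ⟨hy.eq_or_lt.resolve_right fun hlt => hv0 ?_, fun i hi =>
      apply_eq_zero_of_mem_frechetNormal hv (add_single_mem_of_mem_supp hy hi)⟩
    ext i
    exact apply_eq_zero_of_mem_frechetNormal hv (add_single_mem_of_l0_lt hlt i)
  · rintro (rfl | ⟨hys, hv⟩)
    · exact zero_mem_frechetNormal _ y
    · exact mem_frechetNormal_of_l0_eq hys hv

lemma mem_frechetNormal_of_supp_subset {y v w : E n} (hy : y ∈ sparseSet n s)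
    (hw : w ∈ frechetNormal (sparseSet n s) y) (hvw : supp v ⊆ supp w) :
    v ∈ frechetNormal (sparseSet n s) y := by
  refine (mem_frechetNormal_iff hy).2 ?_
  rcases (mem_frechetNormal_iff hy).1 hw with rfl | ⟨hl0, hw⟩
  · left
    ext i
    by_contra hvi
    simpa [mem_supp] using hvw (mem_supp.2 hvi)
  · refine Or.inr ⟨hl0, fun i hi => ?_⟩
    by_contra hvi
    exact mem_supp.1 (hvw (mem_supp.2 hvi)) (hw i hi)

lemma frechetNormal_eq_of_supp_eq {y z : E n} (hy : y ∈ sparseSet n s)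
    (hz : z ∈ sparseSet n s) (hyz : supp y = supp z) :
    frechetNormal (sparseSet n s) y = frechetNormal (sparseSet n s) z := by
  ext v
  rw [mem_frechetNormal_iff hy, mem_frechetNormal_iff hz, l0, l0, hyz]

lemma supp_add_smul_sub_eq {x y : E n} {δ : ℝ} (hδ : ∀ z ∈ ball x δ, supp x ⊆ supp z)
    (hy : y ∈ ball x δ) {t : ℝ} (ht₀ : 0 < t) (ht₁ : t ≤ 1) :
    supp (x + t • (y - x)) = supp y := by
  have hz : x + t • (y - x) ∈ ball x δ := by
    rw [mem_ball, dist_eq_norm, add_sub_cancel_left, norm_smul, Real.norm_of_nonneg ht₀.le,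
      ← dist_eq_norm]
    exact (mul_le_of_le_one_left dist_nonneg ht₁).trans_lt hy
  have hxy : supp x ⊆ supp y := hδ y hy
  ext i
  by_cases hxi : x i = 0
  · simp [mem_supp, hxi, ht₀.ne']
  · have hi : i ∈ supp x := mem_supp.2 hxi
    exact iff_of_true (hδ _ hz hi) (hxy hi)

lemma exists_seq_tendsto_supp_eq {x y : E n} {δ : ℝ}
    (hδ : ∀ z ∈ ball x δ, supp x ⊆ supp z) (hy : y ∈ ball x δ) :
    ∃ xk : ℕ → E n, Tendsto xk atTop (𝓝 x) ∧ ∀ k, supp (xk k) = supp y := by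
  refine ⟨fun k => x + (1 / ((k : ℝ) + 1)) • (y - x), ?_, fun k => ?_⟩
  · simpa using tendsto_const_nhds.add
      ((tendsto_one_div_add_atTop_nhds_zero_nat (𝕜 := ℝ)).smul_const (y - x))
  · exact supp_add_smul_sub_eq hδ hy Nat.one_div_pos_of_nat
      (div_le_one_of_le₀ (by simp) (by positivity))

end SparseSet

open SparseSet in
theorem stmt15_general {n s : ℕ} (x : E n) :
    ∃ δ > (0 : ℝ),
      limitingNormal (sparseSet n s) x
        = ⋃ y ∈ Metric.ball x δ ∩ sparseSet n s, frechetNormal (sparseSet n s) y := by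
  obtain ⟨δ, hδ, hsub⟩ := exists_pos_supp_subset x
  refine ⟨δ, hδ, Set.ext fun v => ?_⟩
  simp only [mem_iUnion, mem_inter_iff, exists_prop]
  constructor
  · rintro ⟨xk, vk, hxkS, hxk, hvk, hv⟩
    obtain ⟨k, hk, hvvk⟩ :=
      ((hxk.eventually (ball_mem_nhds x hδ)).and (hv.eventually (eventually_supp_subset v))).exists
    exact ⟨xk k, ⟨hk, hxkS k⟩, mem_frechetNormal_of_supp_subset (hxkS k) (hvk k) hvvk⟩
  · rintro ⟨y, ⟨hy, hyS⟩, hv⟩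
    obtain ⟨xk, hxk, hsupp⟩ := exists_seq_tendsto_supp_eq hsub hy
    have hxkS k : xk k ∈ sparseSet n s := by
      change l0 _ ≤ s
      rwa [l0, hsupp k]
    exact ⟨xk, fun _ => v, hxkS, hxk,
      fun k => frechetNormal_eq_of_supp_eq hyS (hxkS k) (hsupp k).symm ▸ hv, tendsto_const_nhds⟩

theorem stmt15 {n s : ℕ} (hs : s < n) (x : E n) (hx : x ∈ sparseSet n s) :
    ∃ δ > (0 : ℝ),
      limitingNormal (sparseSet n s) x
        = ⋃ y ∈ Metric.ball x δ ∩ sparseSet n s, frechetNormal (sparseSet n s) y :=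
  stmt15_general x
end
end
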